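/- arXiv:1402.5808 — 4 statements merged into one kernel-verified Lean document; each statement's English description precedes it below -/
import Mathlib

section
/- Exchange lemma for the tableau order: if t is a tableau of shape λ/μ and s is obtained from t by exchanging entries t(k,h_1),...,t(k,h_α) in row k with entries t(k+1,l_1),...,t(k+1,l_α) in row k+1 satisfying t(k+1,l_ν) < t(k,h_ν) for all ν, then s ◁ t (strictly smaller in the order ⊴). -/
open Finset
open scoped Classical

namespace ExchangeLemma

/-- The cells of the skew diagram `λ/μ` (at most `q` rows, 0-indexed). -/
def cells (q : ℕ) (lam mu : ℕ → ℕ) : Finset (ℕ × ℕ) :=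
  ((range q) ×ˢ range ((range q).sup lam)).filter fun p => mu p.1 ≤ p.2 ∧ p.2 < lam p.1

/-- `t_{p,a}`: the number of entries among `z₀, …, z_a` (i.e. values `≤ a`) in the
first `p` rows of the tableau `t` (entries taken in the chain `ℕ`). -/
noncomputable def cnt (q : ℕ) (lam mu : ℕ → ℕ) (t : ℕ × ℕ → ℕ) (p a : ℕ) : ℕ :=
  ((cells q lam mu).filter fun c => c.1 < p ∧ t c ≤ a).card

/-- Exchange lemma for the tableau order.  Let `t` be a tableau of
skew shape `λ/μ` and let `s` be obtained from `t` by exchanging the entries at the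
cells `(κ, h ν)` of row `κ` with the entries at the cells `(κ+1, l ν)` of row `κ+1`
(`ν = 1, …, α`, `α ≥ 1`, the chosen cells being distinct in each row), where
`t(κ+1, l ν) < t(κ, h ν)` for every `ν`.  Then `s ◁ t`: `s_{p,a} ≥ t_{p,a}` for all
`p, a`, with strict inequality for at least one pair. -/
theorem exchange_lemma
    (q : ℕ) (lam mu : ℕ → ℕ)
    (hlam : ∀ i, lam (i + 1) ≤ lam i) (hmu : ∀ i, mu (i + 1) ≤ mu i)
    (hml : ∀ i, mu i ≤ lam i)
    (t s : ℕ × ℕ → ℕ)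
    (κ : ℕ) (α : ℕ) (hα : 0 < α)
    (h l : Fin α → ℕ)
    (hinj : Function.Injective h) (linj : Function.Injective l)
    (hcell : ∀ ν, (κ, h ν) ∈ cells q lam mu)
    (lcell : ∀ ν, (κ + 1, l ν) ∈ cells q lam mu)
    (hlt : ∀ ν, t (κ + 1, l ν) < t (κ, h ν))
    (hs₁ : ∀ ν, s (κ, h ν) = t (κ + 1, l ν))
    (hs₂ : ∀ ν, s (κ + 1, l ν) = t (κ, h ν))
    (hs₃ : ∀ c : ℕ × ℕ, (∀ ν, c ≠ (κ, h ν) ∧ c ≠ (κ + 1, l ν)) → s c = t c) :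
    (∀ p a, cnt q lam mu t p a ≤ cnt q lam mu s p a) ∧
    (∃ p a, cnt q lam mu t p a < cnt q lam mu s p a) := by
  classical
  set C := cells q lam mu with hC
  have gHinj : Function.Injective (fun ν : Fin α => ((κ : ℕ), h ν)) := by
    intro a b hab; exact hinj (congrArg Prod.snd hab)
  have gLinj : Function.Injective (fun ν : Fin α => (κ + 1, l ν)) := by
    intro a b hab; exact linj (congrArg Prod.snd hab)
  set H := (univ : Finset (Fin α)).image (fun ν => ((κ : ℕ), h ν)) with hH
  set L := (univ : Finset (Fin α)).image (fun ν => (κ + 1, l ν)) with hL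
  have hHsub : H ⊆ C := by
    intro c hc
    simp only [hH, mem_image] at hc
    obtain ⟨ν, _, rfl⟩ := hc
    exact hcell ν
  have hLsub : L ⊆ C := by
    intro c hc
    simp only [hL, mem_image] at hc
    obtain ⟨ν, _, rfl⟩ := hc
    exact lcell ν
  have hdisj : Disjoint H L := by
    rw [Finset.disjoint_left]
    intro c hc1 hc2
    simp only [hH, hL, mem_image] at hc1 hc2
    obtain ⟨ν, _, rfl⟩ := hc1
    obtain ⟨μ', _, h2⟩ := hc2
    have := congrArg Prod.fst h2
    simp at this
  have key : ∀ (f : ℕ × ℕ → ℕ) (p a : ℕ), cnt q lam mu f p a =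
      ((C \ (H ∪ L)).filter fun c => c.1 < p ∧ f c ≤ a).card
      + ((univ : Finset (Fin α)).filter fun ν => κ < p ∧ f (κ, h ν) ≤ a).card
      + ((univ : Finset (Fin α)).filter fun ν => κ + 1 < p ∧ f (κ + 1, l ν) ≤ a).card := by
    intro f p a
    have h1 : C = (C \ (H ∪ L)) ∪ (H ∪ L) :=
      (sdiff_union_of_subset (union_subset hHsub hLsub)).symm
    have h2 : cnt q lam mu f p a
        = (((C \ (H ∪ L)) ∪ (H ∪ L)).filter fun c => c.1 < p ∧ f c ≤ a).card := by
      rw [cnt, ← h1]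
    rw [h2, filter_union,
      card_union_of_disjoint (disjoint_filter_filter sdiff_disjoint),
      filter_union,
      card_union_of_disjoint (disjoint_filter_filter hdisj)]
    rw [hH, hL, filter_image, filter_image,
      card_image_of_injective _ gHinj, card_image_of_injective _ gLinj]
    ring
  have hfixed : ∀ p a,
      ((C \ (H ∪ L)).filter fun c => c.1 < p ∧ s c ≤ a)
        = ((C \ (H ∪ L)).filter fun c => c.1 < p ∧ t c ≤ a) := by
    intro p a
    apply filter_congr
    intro c hc
    have hst : s c = t c := by
      apply hs₃
      intro ν
      constructor
      · intro hceq
        exact (mem_sdiff.1 hc).2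
          (mem_union_left _ (mem_image.2 ⟨ν, mem_univ _, hceq.symm⟩))
      · intro hceq
        exact (mem_sdiff.1 hc).2
          (mem_union_right _ (mem_image.2 ⟨ν, mem_univ _, hceq.symm⟩))
    rw [hst]
  have hle : ∀ p a, cnt q lam mu t p a ≤ cnt q lam mu s p a := by
    intro p a
    rw [key t p a, key s p a, hfixed p a, Nat.add_assoc, Nat.add_assoc]
    apply Nat.add_le_add_left
    -- compare exchanged contributions
    by_cases hp2 : κ + 1 < p
    · have hp1 : κ < p := Nat.lt_of_succ_lt hp2
      have e1 : ((univ : Finset (Fin α)).filter fun ν => κ < p ∧ s (κ, h ν) ≤ a)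
          = ((univ : Finset (Fin α)).filter fun ν => κ + 1 < p ∧ t (κ + 1, l ν) ≤ a) := by
        apply filter_congr; intro ν _
        simp [hs₁ ν, hp1, hp2]
      have e2 : ((univ : Finset (Fin α)).filter fun ν => κ + 1 < p ∧ s (κ + 1, l ν) ≤ a)
          = ((univ : Finset (Fin α)).filter fun ν => κ < p ∧ t (κ, h ν) ≤ a) := by
        apply filter_congr; intro ν _
        simp [hs₂ ν, hp1, hp2]
      rw [e1, e2]
      omega
    · have e0 : ∀ f : ℕ × ℕ → ℕ,
          ((univ : Finset (Fin α)).filter fun ν => κ + 1 < p ∧ f (κ + 1, l ν) ≤ a) = ∅ := by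
        intro f
        apply filter_false_of_mem
        intro ν _ hcon
        exact hp2 hcon.1
      rw [e0 t, e0 s]
      apply Nat.add_le_add_right
      apply card_le_card
      intro ν hν
      simp only [mem_filter, mem_univ, true_and] at hν ⊢
      exact ⟨hν.1, by rw [hs₁ ν]; exact le_of_lt (lt_of_lt_of_le (hlt ν) hν.2)⟩
  refine ⟨hle, ?_⟩
  -- strictness at p = κ + 1, a = t (κ+1, l ν₀)
  set ν₀ : Fin α := ⟨0, hα⟩
  refine ⟨κ + 1, t (κ + 1, l ν₀), ?_⟩
  set a := t (κ + 1, l ν₀) with ha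
  rw [key t (κ + 1) a, key s (κ + 1) a, hfixed (κ + 1) a, Nat.add_assoc, Nat.add_assoc]
  apply Nat.add_lt_add_left
  have e0 : ∀ f : ℕ × ℕ → ℕ,
      ((univ : Finset (Fin α)).filter fun ν => κ + 1 < κ + 1 ∧ f (κ + 1, l ν) ≤ a) = ∅ := by
    intro f
    apply filter_false_of_mem
    intro ν _ hcon
    exact absurd hcon.1 (lt_irrefl _)
  rw [e0 t, e0 s]
  apply Nat.add_lt_add_right
  apply card_lt_card
  constructor
  · intro ν hν
    simp only [mem_filter, mem_univ, true_and] at hν ⊢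
    exact ⟨hν.1, by rw [hs₁ ν]; exact le_of_lt (lt_of_lt_of_le (hlt ν) hν.2)⟩
  · intro hsub
    have hmem : ν₀ ∈ (univ : Finset (Fin α)).filter
        fun ν => κ < κ + 1 ∧ s (κ, h ν) ≤ a := by
      simp [hs₁ ν₀, ha]
    have := hsub hmem
    simp only [mem_filter, mem_univ, true_and] at this
    exact absurd this.2 (not_le.2 (hlt ν₀))

end ExchangeLemma
end

section
/- Monotonicity of the M-part with respect to the tableau order: if s and t are tableaux of shape λ/μ with values in the ordered graded set [r+s] (where [r] indexes a basis of M and the remaining s indices a basis of N) and s ⊴ t, then κ(s) ⪰ κ(t) in the lexicographic order, where κ(t)_i = μ_i + (number of entries from [r] in row i of t). -/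
open Finset
open scoped Classical

namespace MPart

/-- The cells of the skew diagram `λ/μ` (at most `q` rows, 0-indexed). -/
def cells (q : ℕ) (lam mu : ℕ → ℕ) : Finset (ℕ × ℕ) :=
  ((range q) ×ˢ range ((range q).sup lam)).filter fun p => mu p.1 ≤ p.2 ∧ p.2 < lam p.1

/-- `t_{p,a}`: the number of entries `≤ a` in the first `p` rows of `t`. -/
noncomputable def cnt (q : ℕ) (lam mu : ℕ → ℕ) (t : ℕ × ℕ → ℕ) (p a : ℕ) : ℕ :=
  ((cells q lam mu).filter fun c => c.1 < p ∧ t c ≤ a).card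

/-- The `M`-part of a tableau with values in the graded ordered set
`[r + s'] = {0, …, r + s' - 1}` whose first `r` letters index a basis of `M`:
`κ(t)_i = μ_i + #(entries of row i lying in [r])`. -/
noncomputable def kappa (q : ℕ) (lam mu : ℕ → ℕ) (r : ℕ) (t : ℕ × ℕ → ℕ) : ℕ → ℕ :=
  fun i => mu i + ((cells q lam mu).filter fun c => c.1 = i ∧ t c < r).card

/-- Lexicographic order `a ⪯ b` on integer sequences. -/
def lexLE (a b : ℕ → ℕ) : Prop :=
  a = b ∨ ∃ i, (∀ j, j < i → a j = b j) ∧ a i < b i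

/-! The partial sums of `κ(t)` over the first `p` rows are `∑_{i<p} μ_i + t_{p,r-1}`, so
`s ⊴ t` makes every partial sum of `κ(s)` at least the corresponding one of `κ(t)`. Such
domination of partial sums forces lexicographic domination: at the first index where the
sequences differ, the preceding partial sums agree. -/

theorem lexLE_of_forall_sum_range_le {f g : ℕ → ℕ}
    (h : ∀ p, ∑ i ∈ range p, f i ≤ ∑ i ∈ range p, g i) : lexLE f g := by
  by_cases hfg : f = g
  · exact Or.inl hfg
  have hne : ∃ i, f i ≠ g i := Function.ne_iff.mp hfg
  have hagree : ∀ j < Nat.find hne, f j = g j := fun j hj => not_not.mp (Nat.find_min hne hj)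
  refine Or.inr ⟨Nat.find hne, hagree, lt_of_le_of_ne ?_ (Nat.find_spec hne)⟩
  have hsum : ∑ i ∈ range (Nat.find hne), f i = ∑ i ∈ range (Nat.find hne), g i :=
    sum_congr rfl fun j hj => hagree j (mem_range.mp hj)
  have hnext := h (Nat.find hne + 1)
  rw [sum_range_succ, sum_range_succ, hsum] at hnext
  omega

theorem card_filter_fst_lt_eq_sum {β : Type*} (S : Finset (ℕ × β)) (P : ℕ × β → Prop)
    [DecidablePred P] (p : ℕ) :
    (S.filter fun c => c.1 < p ∧ P c).card
      = ∑ i ∈ range p, (S.filter fun c => c.1 = i ∧ P c).card := by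
  rw [card_eq_sum_card_fiberwise (f := Prod.fst) (t := range p)]
  · refine sum_congr rfl fun i hi => congrArg card ?_
    ext c
    simp only [mem_filter, mem_range] at hi ⊢
    constructor
    · rintro ⟨⟨hc, -, hP⟩, rfl⟩; exact ⟨hc, rfl, hP⟩
    · rintro ⟨hc, rfl, hP⟩; exact ⟨⟨hc, hi, hP⟩, rfl⟩
  · intro c hc
    simpa using (mem_filter.mp hc).2.1

theorem sum_range_kappa (q : ℕ) (lam mu : ℕ → ℕ) (r : ℕ) (t : ℕ × ℕ → ℕ) (p : ℕ) :
    ∑ i ∈ range p, kappa q lam mu r t i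
      = ∑ i ∈ range p, mu i + ((cells q lam mu).filter fun c => c.1 < p ∧ t c < r).card := by
  rw [card_filter_fst_lt_eq_sum, ← sum_add_distrib]
  rfl

theorem card_filter_lt_le_of_cnt_le {q : ℕ} {lam mu : ℕ → ℕ} {t s : ℕ × ℕ → ℕ}
    (hle : ∀ p a, cnt q lam mu t p a ≤ cnt q lam mu s p a) (p r : ℕ) :
    ((cells q lam mu).filter fun c => c.1 < p ∧ t c < r).card
      ≤ ((cells q lam mu).filter fun c => c.1 < p ∧ s c < r).card := by
  rcases r with _ | a
  · simp
  · simpa only [cnt, Nat.lt_succ_iff] using hle p a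

theorem mpart_monotone_general
    (q : ℕ) (lam mu : ℕ → ℕ) (r : ℕ)
    (t s : ℕ × ℕ → ℕ)
    (hle : ∀ p a, cnt q lam mu t p a ≤ cnt q lam mu s p a) :
    lexLE (kappa q lam mu r t) (kappa q lam mu r s) := by
  refine lexLE_of_forall_sum_range_le fun p => ?_
  rw [sum_range_kappa, sum_range_kappa]
  exact Nat.add_le_add_left (card_filter_lt_le_of_cnt_le hle p r) _

/-- Monotonicity of the `M`-part, Lemma II.4.4 of ABW.  If `s` and `t`
are tableaux of shape `λ/μ` with values in the ordered set `[r + s']` (first `r`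
letters indexing a basis of `M`, the rest a basis of `N`) and `s ⊴ t` (that is,
`s_{p,a} ≥ t_{p,a}` for all `p, a`), then `κ(s) ⪰ κ(t)` in the lexicographic
order. -/
theorem mpart_monotone
    (q : ℕ) (lam mu : ℕ → ℕ) (r s' : ℕ)
    (t s : ℕ × ℕ → ℕ)
    (ht : ∀ c ∈ cells q lam mu, t c < r + s')
    (hs : ∀ c ∈ cells q lam mu, s c < r + s')
    (hle : ∀ p a, cnt q lam mu t p a ≤ cnt q lam mu s p a) :
    lexLE (kappa q lam mu r t) (kappa q lam mu r s) :=
  mpart_monotone_general q lam mu r t s hle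

end MPart
end

section
/- If s ⊴RC t for costandard tableaux s, t of shape λ (meaning there exists a tableau r row-equivalent to s and column-equivalent to t), then the reading word of s is lexicographically ≥ the reading word of t; moreover equality of words forces s = t. -/
open Finset
open scoped Classical

namespace RCOrder

variable (q m n : ℕ) (lam : ℕ → ℕ)

/-- The multiset of entries of row `i` of a tableau of shape `λ`. -/
def rowM (t : ℕ × ℕ → Fin (m + n)) (i : ℕ) : Multiset (Fin (m + n)) :=
  (range (lam i)).val.map fun j => t (i, j)

/-- The multiset of entries of column `j`. -/
def colM (t : ℕ × ℕ → Fin (m + n)) (j : ℕ) : Multiset (Fin (m + n)) :=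
  (((range q).filter fun i => j < lam i)).val.map fun i => t (i, j)

/-- Row equivalence: `r` is obtained from `s` by permuting entries within rows. -/
def RowEquiv (r s : ℕ × ℕ → Fin (m + n)) : Prop := ∀ i, rowM m n lam r i = rowM m n lam s i

/-- Column equivalence: `r` is obtained from `t` by permuting entries within
columns. -/
def ColEquiv (r t : ℕ × ℕ → Fin (m + n)) : Prop := ∀ j, colM q m n lam r j = colM q m n lam t j

/-- Costandard: rows nondecreasing with repeats only among the odd letters
(those of index `≥ m`), columns nondecreasing with repeats only among the even
letters (index `< m`). -/
def Costd (t : ℕ × ℕ → Fin (m + n)) : Prop :=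
  (∀ i j, i < q → j + 1 < lam i →
    t (i, j) ≤ t (i, j + 1) ∧ (t (i, j) = t (i, j + 1) → m ≤ (t (i, j) : ℕ))) ∧
  (∀ i j, i + 1 < q → j < lam (i + 1) →
    t (i, j) ≤ t (i + 1, j) ∧ (t (i, j) = t (i + 1, j) → (t (i, j) : ℕ) < m))

/-- The reading word of a tableau (rows left to right, top to bottom). -/
def wrd (t : ℕ × ℕ → Fin (m + n)) : List (Fin (m + n)) :=
  (List.range q).flatMap fun i => (List.range (lam i)).map fun j => t (i, j)

/-!
Induct on the rows. The columns of `t` increase downwards and `r` has the columns of `t`, so the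
top row of `r` dominates that of `t` entrywise. The top row of `s` is the sorted rearrangement of
the top row of `r`, and sorting a row that dominates a sorted row entrywise keeps the domination,
so the top row of `s` dominates that of `t`. If the two top rows differ this decides the
lexicographic comparison; if they agree, the top rows of `r` and `t` are rearrangements of each
other with one dominating the other, hence equal, and removing the top row of `r`, `s`, `t`
preserves all hypotheses.
-/

section

variable {α : Type*}

theorem _root_.List.Lex.append_of_length_eq {r : α → α → Prop} {l₁ l₂ : List α}
    (h : List.Lex r l₁ l₂) (hl : l₁.length = l₂.length) (c d : List α) :
    List.Lex r (l₁ ++ c) (l₂ ++ d) := by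
  induction h with
  | nil => simp at hl
  | cons _ ih => exact .cons (ih (by simpa using hl))
  | rel h => exact .rel h

theorem _root_.List.eq_or_lex_of_forall₂_le [PartialOrder α] {l₁ l₂ : List α}
    (h : List.Forall₂ (· ≤ ·) l₁ l₂) : l₁ = l₂ ∨ List.Lex (· < ·) l₁ l₂ := by
  induction h with
  | nil => exact .inl rfl
  | @cons a b l₁ l₂ hab _ ih =>
    rcases hab.lt_or_eq with hlt | rfl
    · exact .inr (.rel hlt)
    · exact ih.imp (congrArg _) .cons

end

section

variable {α : Type*} {N : ℕ}

theorem _root_.Finset.countP_map_range (f : ℕ → α) (p : α → Prop) [DecidablePred p] :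
    ((range N).val.map f).countP p = #{k ∈ range N | p (f k)} := by
  rw [Multiset.countP_map]
  rfl

theorem _root_.Finset.le_of_map_range_eq_of_le [LinearOrder α] {a b c : ℕ → α}
    (ha : MonotoneOn a (Set.Iio N)) (hb : MonotoneOn b (Set.Iio N))
    (hcb : (range N).val.map c = (range N).val.map b) (hac : ∀ k < N, a k ≤ c k)
    {j : ℕ} (hj : j < N) : a j ≤ b j := by
  by_contra! hba
  have hc : #{k ∈ range N | c k < a j} ≤ j := by
    refine (card_le_card fun k hk => ?_).trans (card_range j).le
    simp only [mem_filter, mem_range] at hk ⊢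
    by_contra! hjk
    exact (hk.2.trans_le' ((ha hj hk.1 hjk).trans (hac k hk.1))).false
  have hb' : j + 1 ≤ #{k ∈ range N | b k < a j} := by
    refine (card_range (j + 1)).ge.trans (card_le_card fun k hk => ?_)
    simp only [mem_filter, mem_range] at hk ⊢
    exact ⟨by omega, (hb (by simp; omega) hj (by omega)).trans_lt hba⟩
  rw [← countP_map_range c (· < a j), hcb, countP_map_range] at hc
  omega

theorem _root_.Finset.eq_of_map_range_eq_of_le [PartialOrder α] {a c : ℕ → α}
    (hca : (range N).val.map c = (range N).val.map a) (hac : ∀ k < N, a k ≤ c k)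
    {k : ℕ} (hk : k < N) : a k = c k := by
  by_contra hne
  have hlt : a k < c k := (hac k hk).lt_of_ne hne
  have hsub : {i ∈ range N | c i ≤ a k} ⊂ {i ∈ range N | a i ≤ a k} := by
    refine (ssubset_iff_of_subset fun i hi => ?_).2 ⟨k, ?_, ?_⟩
    · simp only [mem_filter] at hi ⊢
      exact ⟨hi.1, (hac i (mem_range.1 hi.1)).trans hi.2⟩
    · simp [hk]
    · simp [hlt.not_ge]
  have := card_lt_card hsub
  rw [← countP_map_range c (· ≤ a k), hca, countP_map_range] at this
  exact this.false

end

section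

variable {q m n lam}

theorem Costd.monotoneOn_row {t : ℕ × ℕ → Fin (m + n)} (ht : Costd q m n lam t) {i : ℕ}
    (hi : i < q) : MonotoneOn (fun j => t (i, j)) (Set.Iio (lam i)) :=
  monotoneOn_of_le_add_one Set.ordConnected_Iio fun j _ _ hj => (ht.1 i j hi hj).1

theorem Costd.top_le (hlam : ∀ i, lam (i + 1) ≤ lam i) {t : ℕ × ℕ → Fin (m + n)}
    (ht : Costd q m n lam t) {i j : ℕ} (hi : i < q) (hj : j < lam i) : t (0, j) ≤ t (i, j) := by
  induction i with
  | zero => rfl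
  | succ i ih => exact (ih (by omega) (hj.trans_le (hlam i))).trans (ht.2 i j hi hj).1

theorem Costd.tail {t : ℕ × ℕ → Fin (m + n)} (ht : Costd (q + 1) m n lam t) :
    Costd q m n (fun i => lam (i + 1)) (fun p => t (p.1 + 1, p.2)) :=
  ⟨fun i j hi hj => ht.1 (i + 1) j (by omega) hj, fun i j hi hj => ht.2 (i + 1) j (by omega) hj⟩

theorem mem_colM {t : ℕ × ℕ → Fin (m + n)} {j : ℕ} {x : Fin (m + n)} :
    x ∈ colM q m n lam t j ↔ ∃ i < q, j < lam i ∧ t (i, j) = x := by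
  simp [colM, and_assoc]

theorem top_le_of_colEquiv (hlam : ∀ i, lam (i + 1) ≤ lam i) {r t : ℕ × ℕ → Fin (m + n)}
    (ht : Costd q m n lam t) (hcol : ColEquiv q m n lam r t) (hq : 0 < q) {j : ℕ}
    (hj : j < lam 0) : t (0, j) ≤ r (0, j) := by
  have hmem : r (0, j) ∈ colM q m n lam t j := hcol j ▸ mem_colM.2 ⟨0, hq, hj, rfl⟩
  obtain ⟨i, hi, hji, hx⟩ := mem_colM.1 hmem
  exact hx ▸ ht.top_le hlam hi hji

theorem colM_succ (t : ℕ × ℕ → Fin (m + n)) (j : ℕ) :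
    colM (q + 1) m n lam t j = (if j < lam 0 then {t (0, j)} else 0) +
      colM q m n (fun i => lam (i + 1)) (fun p => t (p.1 + 1, p.2)) j := by
  have hval : ∀ (Q : ℕ) (p : ℕ → Prop) [DecidablePred p],
      ((range Q).filter p).val = ((List.range Q).filter (fun i => decide (p i)) : List ℕ) :=
    fun _ _ _ => rfl
  unfold colM
  rw [hval, hval, List.range_succ_eq_map, List.filter_cons]
  by_cases h : j < lam 0 <;> simp [h, List.filter_map, Function.comp_def]

theorem ColEquiv.tail {r t : ℕ × ℕ → Fin (m + n)} (hcol : ColEquiv (q + 1) m n lam r t)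
    (htop : ∀ j < lam 0, r (0, j) = t (0, j)) :
    ColEquiv q m n (fun i => lam (i + 1)) (fun p => r (p.1 + 1, p.2))
      (fun p => t (p.1 + 1, p.2)) := by
  intro j
  have h := hcol j
  rw [colM_succ, colM_succ] at h
  split_ifs at h with hj
  · rw [htop j hj] at h
    exact add_left_cancel h
  · simpa using h

theorem wrd_succ (t : ℕ × ℕ → Fin (m + n)) :
    wrd (q + 1) m n lam t = (List.range (lam 0)).map (fun j => t (0, j)) ++
      wrd q m n (fun i => lam (i + 1)) (fun p => t (p.1 + 1, p.2)) := by
  rw [wrd, List.range_succ_eq_map, List.flatMap_cons, List.flatMap_map]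
  rfl

theorem eq_of_wrd_eq {s t : ℕ × ℕ → Fin (m + n)} (h : wrd q m n lam s = wrd q m n lam t)
    {i j : ℕ} (hi : i < q) (hj : j < lam i) : s (i, j) = t (i, j) := by
  induction q generalizing lam s t i with
  | zero => omega
  | succ q ih =>
    rw [wrd_succ, wrd_succ] at h
    obtain ⟨htop, htail⟩ := List.append_inj h (by simp)
    cases i with
    | zero => exact List.map_inj_left.1 htop j (List.mem_range.2 hj)
    | succ i => exact ih htail (by omega) hj

theorem wrd_eq_or_lex_of_rc (hlam : ∀ i, lam (i + 1) ≤ lam i)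
    {r s t : ℕ × ℕ → Fin (m + n)} (hs : Costd q m n lam s) (ht : Costd q m n lam t)
    (hrow : RowEquiv m n lam r s) (hcol : ColEquiv q m n lam r t) :
    wrd q m n lam s = wrd q m n lam t ∨
      List.Lex (· < ·) (wrd q m n lam t) (wrd q m n lam s) := by
  induction q generalizing lam r s t with
  | zero => exact .inl rfl
  | succ q ih =>
    have htr : ∀ j < lam 0, t (0, j) ≤ r (0, j) := fun j =>
      top_le_of_colEquiv hlam ht hcol q.succ_pos
    have hts : ∀ j < lam 0, t (0, j) ≤ s (0, j) := fun j =>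
      Finset.le_of_map_range_eq_of_le (ht.monotoneOn_row q.succ_pos)
        (hs.monotoneOn_row q.succ_pos) (hrow 0) htr
    rw [wrd_succ, wrd_succ]
    rcases List.eq_or_lex_of_forall₂_le (List.forall₂_map_left_iff.2 <|
      List.forall₂_map_right_iff.2 <| List.forall₂_same.2 fun j hj => hts j
        (List.mem_range.1 hj)) with htop | hlex
    · have hrt : ∀ j < lam 0, r (0, j) = t (0, j) := fun j hj =>
        (Finset.eq_of_map_range_eq_of_le ((hrow 0).trans (congrArg Multiset.ofList htop.symm))
          htr hj).symm
      rw [htop]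
      exact (ih (r := fun p => r (p.1 + 1, p.2)) (fun i => hlam (i + 1)) hs.tail ht.tail
        (fun i => hrow (i + 1)) (hcol.tail hrt)).imp (congrArg _) (List.Lex.append_left _ · _)
    · exact .inr (hlex.append_of_length_eq (by simp) _ _)

end

theorem reading_word_ge_of_rc
    (hlam : ∀ i, lam (i + 1) ≤ lam i)
    (s t : ℕ × ℕ → Fin (m + n))
    (hs : Costd q m n lam s) (ht : Costd q m n lam t)
    (hrc : ∃ r, RowEquiv m n lam r s ∧ ColEquiv q m n lam r t) :
    (wrd q m n lam s = wrd q m n lam t ∨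
      List.Lex (· < ·) (wrd q m n lam t) (wrd q m n lam s)) ∧
    (wrd q m n lam s = wrd q m n lam t →
      ∀ i j, i < q → j < lam i → s (i, j) = t (i, j)) := by
  obtain ⟨r, hrow, hcol⟩ := hrc
  exact ⟨wrd_eq_or_lex_of_rc hlam hs ht hrow hcol,
    fun h _ _ hi hj => eq_of_wrd_eq h hi hj⟩

end RCOrder
end

section
/- Combinatorial bijection underlying the hook Schur character: standard tableaux of shape λ with entries in the graded ordered set [m+n] (first m indices even, last n odd) are in weight-preserving bijection with pairs consisting of a semistandard tableau of shape μ in the even alphabet {1,...,m} and a semistandard tableau of conjugate skew shape λ'/μ' in the odd alphabet {1,...,n}, over all partitions μ ⊂ λ. -/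
open Finset
open scoped Classical

namespace HookBijection

/-- The cells of the skew diagram `λ/μ` (at most `q` rows, 0-indexed). -/
def cells (q : ℕ) (lam mu : ℕ → ℕ) : Finset (ℕ × ℕ) :=
  ((range q) ×ˢ range ((range q).sup lam)).filter fun p => mu p.1 ≤ p.2 ∧ p.2 < lam p.1

/-- Semistandard: rows weakly increasing, columns strictly increasing. -/
def SSYT {a : ℕ} (cs : Finset (ℕ × ℕ)) (T : ↥cs → Fin a) : Prop :=
  (∀ (c c' : ↥cs), c.1.1 = c'.1.1 → c'.1.2 = c.1.2 + 1 → T c ≤ T c') ∧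
  (∀ (c c' : ↥cs), c.1.2 = c'.1.2 → c'.1.1 = c.1.1 + 1 → T c < T c')

/-- Standard (in the super sense) for the graded alphabet `[m + n]`, the first `m`
letters even and the last `n` odd: rows nondecreasing with repeats only among the
even letters, columns nondecreasing with repeats only among the odd letters. -/
def StdPred (m n : ℕ) (cs : Finset (ℕ × ℕ)) (t : ↥cs → Fin (m + n)) : Prop :=
  (∀ (c c' : ↥cs), c.1.1 = c'.1.1 → c'.1.2 = c.1.2 + 1 →
    t c ≤ t c' ∧ (t c = t c' → (t c : ℕ) < m)) ∧
  (∀ (c c' : ↥cs), c.1.2 = c'.1.2 → c'.1.1 = c.1.1 + 1 →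
    t c ≤ t c' ∧ (t c = t c' → m ≤ (t c : ℕ)))

/-- The partition `μ ⊆ λ` encoded by `f`. -/
def muOf (q : ℕ) (lam : ℕ → ℕ) (f : (i : Fin q) → Fin (lam i + 1)) : ℕ → ℕ :=
  fun i => if h : i < q then (f ⟨i, h⟩ : ℕ) else 0

/-- The cells of the conjugate skew shape `λ'/μ'`. -/
noncomputable def conjSkewCells (q : ℕ) (lam mu : ℕ → ℕ) : Finset (ℕ × ℕ) :=
  (cells q lam (fun _ => 0) \ cells q mu (fun _ => 0)).image Prod.swap

variable (q m n : ℕ) (lam : ℕ → ℕ)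

/-- Standard tableaux of shape `λ` with values in `[m + n]`. -/
def StdTab := {t : ↥(cells q lam (fun _ => 0)) → Fin (m + n) //
  StdPred m n (cells q lam (fun _ => 0)) t}

/-- Pairs: a partition `μ ⊆ λ`, a semistandard tableau of shape `μ` in the even
alphabet `[m]`, and a semistandard tableau of shape `λ'/μ'` in the odd alphabet
`[n]`. -/
def PairTab :=
  Σ f : {f : (i : Fin q) → Fin (lam i + 1) //
      ∀ i j : Fin q, i ≤ j → (f j : ℕ) ≤ (f i : ℕ)},
    {T : ↥(cells q (muOf q lam f.1) (fun _ => 0)) → Fin m //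
        SSYT (cells q (muOf q lam f.1) (fun _ => 0)) T} ×
      {T : ↥(conjSkewCells q lam (muOf q lam f.1)) → Fin n //
        SSYT (conjSkewCells q lam (muOf q lam f.1)) T}

/-- The weight of a standard tableau. -/
noncomputable def wtStd (t : StdTab q m n lam) (a : Fin (m + n)) : ℕ :=
  ((univ : Finset ↥(cells q lam (fun _ => 0))).filter fun c => t.1 c = a).card

/-- The weight of a pair (letter `a < m` counted in the even tableau, letter
`a ≥ m` counted in the odd tableau, via the canonical embeddings of `[m]` and `[n]`
into `[m+n]`). -/
noncomputable def wtPair (p : PairTab q m n lam) (a : Fin (m + n)) : ℕ :=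
  ((univ : Finset ↥(cells q (muOf q lam p.1.1) (fun _ => 0))).filter
      fun c => Fin.castAdd n (p.2.1.1 c) = a).card +
  ((univ : Finset ↥(conjSkewCells q lam (muOf q lam p.1.1))).filter
      fun c => Fin.natAdd m (p.2.2.1 c) = a).card

/-!
In a standard tableau the even letters `0, …, m - 1` precede the odd ones, so the even cells
of each row form an initial segment; by the column condition these segments shrink from row to
row, i.e. they form a diagram `μ ⊆ λ`. Equal letters in a column must be odd, so on `μ` the
tableau is semistandard in `[m]`; equal letters in a row must be even, so on `λ/μ`, shifted down
by `m` and transposed, it is semistandard in `[n]`. Gluing two such tableaux along `μ` inverts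
the splitting, and both maps keep every letter where it is.
-/

section

variable {q m n lam}

theorem le_and_eq_imp_of_lt {α : Type*} [Preorder α] {x y : α} {P : Prop} (h : x < y) :
    x ≤ y ∧ (x = y → P) :=
  ⟨h.le, fun e => absurd e h.ne⟩

theorem castAdd_lt_natAdd (a : Fin m) (b : Fin n) : Fin.castAdd n a < Fin.natAdd m b := by
  rw [Fin.lt_def, Fin.val_castAdd, Fin.val_natAdd]; omega

theorem card_filter_univ_subtype {α : Type*} (s : Finset α) (P : α → Prop) [DecidablePred P] :
    #(univ.filter fun x : s => P x.1) = #(s.filter P) := by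
  rw [univ_eq_attach, filter_attach, card_map, card_attach]

theorem card_filter_eq_card_filter_add_card_filter_sdiff {α : Type*} [DecidableEq α]
    {s t : Finset α} (h : s ⊆ t) (P : α → Prop) [DecidablePred P] :
    #(t.filter P) = #(s.filter P) + #((t \ s).filter P) := by
  have hdisj : Disjoint (s.filter P) ((t \ s).filter P) :=
    disjoint_filter_filter disjoint_sdiff_self_right
  rw [← card_union_of_disjoint hdisj,
    ← filter_union, union_sdiff_of_subset h]

theorem mem_cells_zero {mu : ℕ → ℕ} {p : ℕ × ℕ} :
    p ∈ cells q mu (fun _ => 0) ↔ p.1 < q ∧ p.2 < mu p.1 := by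
  simp only [cells, mem_filter, mem_product, mem_range, Nat.zero_le, true_and]
  exact ⟨fun h => ⟨h.1.1, h.2⟩,
    fun h => ⟨⟨h.1, h.2.trans_le (le_sup (mem_range.2 h.1))⟩, h.2⟩⟩

theorem isLowerSet_cells {mu : ℕ → ℕ} (hmu : Antitone mu) :
    IsLowerSet (cells q mu (fun _ => 0) : Set (ℕ × ℕ)) := fun p p' hle hp => by
  rw [mem_coe, mem_cells_zero] at hp ⊢
  exact ⟨hle.1.trans_lt hp.1, hle.2.trans_lt (hp.2.trans_le (hmu hle.1))⟩

theorem mem_conjSkewCells {mu : ℕ → ℕ} {p : ℕ × ℕ} :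
    p ∈ conjSkewCells q lam mu ↔
      p.swap ∈ cells q lam (fun _ => 0) ∧ p.swap ∉ cells q mu (fun _ => 0) := by
  rw [conjSkewCells, mem_image, ← mem_sdiff]
  exact ⟨fun ⟨a, ha, hp⟩ => hp ▸ a.swap_swap.symm ▸ ha,
    fun h => ⟨p.swap, h, p.swap_swap⟩⟩

variable (q lam) in
abbrev Shape :=
  {f : (i : Fin q) → Fin (lam i + 1) // ∀ i j : Fin q, i ≤ j → (f j : ℕ) ≤ (f i : ℕ)}

theorem muOf_of_lt (f : (i : Fin q) → Fin (lam i + 1)) {i : ℕ} (hi : i < q) :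
    muOf q lam f i = f ⟨i, hi⟩ := dif_pos hi

theorem antitone_muOf (f : Shape q lam) : Antitone (muOf q lam f.1) := by
  intro i j hij
  unfold muOf
  split_ifs with hj hi hi
  · exact f.2 ⟨i, hi⟩ ⟨j, hj⟩ hij
  · omega
  · exact Nat.zero_le _
  · exact le_rfl

theorem cells_muOf_subset (f : (i : Fin q) → Fin (lam i + 1)) :
    cells q (muOf q lam f) (fun _ => 0) ⊆ cells q lam (fun _ => 0) := by
  intro p hp
  rw [mem_cells_zero] at hp ⊢
  refine ⟨hp.1, hp.2.trans_le ?_⟩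
  rw [muOf_of_lt f hp.1]
  exact Nat.lt_succ_iff.1 (f _).2

namespace StdTab

variable (t : StdTab q m n lam)

/-- Cells outside `λ` read as the odd letter `m`, so that `t.entry p < m` says exactly that
`p` is a cell of `λ` carrying an even letter. -/
noncomputable def entry (p : ℕ × ℕ) : ℕ :=
  if h : p ∈ cells q lam (fun _ => 0) then t.1 ⟨p, h⟩ else m

variable {t}

theorem entry_of_mem {p : ℕ × ℕ} (h : p ∈ cells q lam (fun _ => 0)) :
    t.entry p = t.1 ⟨p, h⟩ := dif_pos h

theorem entry_lt_add {p : ℕ × ℕ} (h : p ∈ cells q lam (fun _ => 0)) : t.entry p < m + n := by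
  rw [entry_of_mem h]
  exact (t.1 _).2

theorem mem_of_entry_lt {p : ℕ × ℕ} (h : t.entry p < m) : p ∈ cells q lam (fun _ => 0) := by
  by_contra hp
  rw [entry, dif_neg hp] at h
  exact lt_irrefl m h

theorem entry_row {i j : ℕ} (h : (i, j + 1) ∈ cells q lam (fun _ => 0)) :
    t.entry (i, j) ≤ t.entry (i, j + 1) ∧
      (t.entry (i, j) = t.entry (i, j + 1) → t.entry (i, j) < m) := by
  have h' : (i, j) ∈ cells q lam (fun _ => 0) := by
    rw [mem_cells_zero] at h ⊢
    exact ⟨h.1, (j.lt_succ_self).trans h.2⟩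
  have hstep := t.2.1 ⟨_, h'⟩ ⟨_, h⟩ rfl rfl
  rw [entry_of_mem h, entry_of_mem h']
  exact ⟨hstep.1, fun e => hstep.2 (Fin.ext e)⟩

theorem entry_col (hlam : Antitone lam) {i j : ℕ} (h : (i + 1, j) ∈ cells q lam (fun _ => 0)) :
    t.entry (i, j) ≤ t.entry (i + 1, j) ∧
      (t.entry (i, j) = t.entry (i + 1, j) → m ≤ t.entry (i, j)) := by
  have h' : (i, j) ∈ cells q lam (fun _ => 0) :=
    isLowerSet_cells hlam (Prod.mk_le_mk.2 ⟨i.le_succ, le_rfl⟩) h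
  have hstep := t.2.2 ⟨_, h'⟩ ⟨_, h⟩ rfl rfl
  rw [entry_of_mem h, entry_of_mem h']
  exact ⟨hstep.1, fun e => hstep.2 (Fin.ext e)⟩

theorem entry_mono_row {i j k : ℕ} (h : (i, j) ∈ cells q lam (fun _ => 0)) (hkj : k ≤ j) :
    t.entry (i, k) ≤ t.entry (i, j) := by
  induction hkj with
  | refl => exact le_rfl
  | @step j _ ih =>
    have h' : (i, j) ∈ cells q lam (fun _ => 0) := by
      rw [mem_cells_zero] at h ⊢
      exact ⟨h.1, (j.lt_succ_self).trans h.2⟩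
    exact (ih h').trans (entry_row h).1

variable (t) in
noncomputable def evenRowLength (i : ℕ) : ℕ :=
  Nat.find (p := fun k => ¬ t.entry (i, k) < m)
    ⟨lam i, fun h => by simpa [mem_cells_zero] using mem_of_entry_lt h⟩

theorem lt_evenRowLength_iff {i j : ℕ} : j < t.evenRowLength i ↔ t.entry (i, j) < m := by
  rw [evenRowLength, Nat.lt_find_iff]
  refine ⟨fun h => not_not.1 (h j le_rfl), fun h k hk => not_not.2 ?_⟩
  exact (entry_mono_row (mem_of_entry_lt h) hk).trans_lt h

theorem evenRowLength_le (i : ℕ) : t.evenRowLength i ≤ lam i :=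
  Nat.find_min' _ fun h => by simpa [mem_cells_zero] using mem_of_entry_lt h

theorem antitone_evenRowLength (hlam : Antitone lam) : Antitone t.evenRowLength := by
  refine antitone_nat_of_succ_le fun i => le_of_forall_lt fun j hj => ?_
  rw [lt_evenRowLength_iff] at hj ⊢
  exact (entry_col hlam (mem_of_entry_lt hj)).1.trans_lt hj

variable (t) in
noncomputable def evenShape (hlam : Antitone lam) : Shape q lam :=
  ⟨fun i => ⟨t.evenRowLength i, Nat.lt_succ_of_le (evenRowLength_le i)⟩,
    fun _ _ hij => antitone_evenRowLength hlam hij⟩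

variable (t) in
def HasEvenShape (mu : ℕ → ℕ) : Prop :=
  ∀ p, p ∈ cells q mu (fun _ => 0) ↔ t.entry p < m

theorem HasEvenShape.subset {mu : ℕ → ℕ} (ht : t.HasEvenShape mu) :
    cells q mu (fun _ => 0) ⊆ cells q lam (fun _ => 0) :=
  fun p hp => mem_of_entry_lt ((ht p).1 hp)

theorem evenShape_eq_iff (hlam : Antitone lam) (f : Shape q lam) :
    t.evenShape hlam = f ↔ t.HasEvenShape (muOf q lam f.1) := by
  have hrow : ∀ {i : ℕ} (hi : i < q) (j : ℕ),
      (i, j) ∈ cells q (muOf q lam f.1) (fun _ => 0) ↔ j < f.1 ⟨i, hi⟩ := by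
    intro i hi j
    rw [mem_cells_zero, muOf_of_lt _ hi]
    exact and_iff_right hi
  constructor
  · rintro rfl ⟨i, j⟩
    by_cases hi : i < q
    · exact (hrow hi j).trans lt_evenRowLength_iff
    · refine iff_of_false (fun h => hi (mem_cells_zero.1 h).1) fun h => hi ?_
      exact (mem_cells_zero.1 (mem_of_entry_lt h)).1
  · intro ht
    refine Subtype.ext (funext fun i => Fin.ext (eq_of_forall_lt_iff fun j => ?_))
    exact lt_evenRowLength_iff.trans ((ht _).symm.trans (hrow i.2 j))

variable {mu : ℕ → ℕ}

noncomputable def evenPart (hlam : Antitone lam) (ht : t.HasEvenShape mu) :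
    {T : ↥(cells q mu (fun _ => 0)) → Fin m // SSYT (cells q mu (fun _ => 0)) T} :=
  ⟨fun c => ⟨t.entry c, (ht c).1 c.2⟩, by
    constructor
    · rintro ⟨⟨i, j⟩, -⟩ ⟨⟨_, _⟩, hc'⟩ rfl rfl
      exact (entry_row (mem_of_entry_lt ((ht _).1 hc'))).1
    · rintro ⟨⟨i, j⟩, hc⟩ ⟨⟨_, _⟩, hc'⟩ rfl rfl
      have hstep := entry_col (t := t) hlam (mem_of_entry_lt ((ht _).1 hc'))
      exact hstep.1.lt_of_ne fun e => (hstep.2 e).not_gt ((ht _).1 hc)⟩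

theorem le_entry_swap_of_mem_conjSkewCells (ht : t.HasEvenShape mu) {p : ℕ × ℕ}
    (hp : p ∈ conjSkewCells q lam mu) : m ≤ t.entry p.swap :=
  not_lt.1 fun h => (mem_conjSkewCells.1 hp).2 ((ht _).2 h)

noncomputable def oddPart (hlam : Antitone lam) (ht : t.HasEvenShape mu) :
    {U : ↥(conjSkewCells q lam mu) → Fin n // SSYT (conjSkewCells q lam mu) U} :=
  ⟨fun c => ⟨t.entry c.1.swap - m, by
    have := entry_lt_add (t := t) (mem_conjSkewCells.1 c.2).1
    have := t.le_entry_swap_of_mem_conjSkewCells ht c.2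
    omega⟩, by
    constructor
    · rintro ⟨⟨a, b⟩, -⟩ ⟨⟨_, _⟩, hc'⟩ rfl rfl
      exact Nat.sub_le_sub_right (entry_col hlam (mem_conjSkewCells.1 hc').1).1 m
    · rintro ⟨⟨a, b⟩, hc⟩ ⟨⟨_, _⟩, hc'⟩ rfl rfl
      have hstep := entry_row (t := t) (mem_conjSkewCells.1 hc').1
      have hodd := t.le_entry_swap_of_mem_conjSkewCells ht hc
      dsimp only [Prod.swap] at hstep hodd
      show t.entry (b, a) - m < t.entry (b, a + 1) - m
      have := hstep.1.lt_of_ne fun e => (hstep.2 e).not_ge hodd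
      omega⟩

theorem wtStd_eq_card_filter_entry (a : Fin (m + n)) :
    wtStd q m n lam t a = #((cells q lam (fun _ => 0)).filter (t.entry · = a)) := by
  refine Eq.trans ?_ (card_filter_univ_subtype _ _)
  refine congrArg card (filter_congr fun c _ => ?_)
  rw [entry_of_mem c.2, Fin.val_eq_val]

theorem wtStd_eq_card_evenPart_add_card_oddPart (hlam : Antitone lam)
    (ht : t.HasEvenShape mu) (a : Fin (m + n)) :
    wtStd q m n lam t a =
      #(univ.filter fun c => Fin.castAdd n ((t.evenPart hlam ht).1 c) = a) +
        #(univ.filter fun c => Fin.natAdd m ((t.oddPart hlam ht).1 c) = a) := by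
  have heven : #(univ.filter fun c => Fin.castAdd n ((t.evenPart hlam ht).1 c) = a) =
      #((cells q mu (fun _ => 0)).filter (t.entry · = a)) := by
    refine Eq.trans ?_ (card_filter_univ_subtype _ _)
    exact congrArg card (filter_congr fun c _ => Fin.ext_iff)
  have hodd : #(univ.filter fun c => Fin.natAdd m ((t.oddPart hlam ht).1 c) = a) =
      #((cells q lam (fun _ => 0) \ cells q mu (fun _ => 0)).filter (t.entry · = a)) := by
    have hval : ∀ c : ↥(conjSkewCells q lam mu),
        Fin.natAdd m ((t.oddPart hlam ht).1 c) = a ↔ t.entry c.1.swap = a := fun c => by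
      have := t.le_entry_swap_of_mem_conjSkewCells ht c.2
      rw [Fin.ext_iff]
      show m + (t.entry c.1.swap - m) = a ↔ _
      omega
    rw [filter_congr fun c _ => hval c,
      card_filter_univ_subtype _ (fun p : ℕ × ℕ => t.entry p.swap = a), conjSkewCells,
      filter_image, card_image_of_injective _ Prod.swap_injective]
    simp only [Prod.swap_swap]
  rw [heven, hodd, wtStd_eq_card_filter_entry]
  exact card_filter_eq_card_filter_add_card_filter_sdiff ht.subset _

end StdTab

variable {mu : ℕ → ℕ}

noncomputable def glue (T : ↥(cells q mu (fun _ => 0)) → Fin m)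
    (U : ↥(conjSkewCells q lam mu) → Fin n) : ↥(cells q lam (fun _ => 0)) → Fin (m + n) :=
  fun c => if h : c.1 ∈ cells q mu (fun _ => 0) then Fin.castAdd n (T ⟨c.1, h⟩)
    else Fin.natAdd m (U ⟨c.1.swap, mem_conjSkewCells.2 ⟨c.2, h⟩⟩)

section Glue

variable {T : ↥(cells q mu (fun _ => 0)) → Fin m} {U : ↥(conjSkewCells q lam mu) → Fin n}
  {c : ↥(cells q lam (fun _ => 0))}

theorem glue_of_mem (h : c.1 ∈ cells q mu (fun _ => 0)) :
    glue T U c = Fin.castAdd n (T ⟨c.1, h⟩) := dif_pos h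

theorem glue_of_not_mem (h : c.1 ∉ cells q mu (fun _ => 0)) :
    glue T U c = Fin.natAdd m (U ⟨c.1.swap, mem_conjSkewCells.2 ⟨c.2, h⟩⟩) := dif_neg h

theorem stdPred_glue (hmu : Antitone mu) (hT : SSYT _ T) (hU : SSYT _ U) :
    StdPred m n (cells q lam (fun _ => 0)) (glue T U) := by
  have hlow := isLowerSet_cells (q := q) hmu
  constructor
  · rintro ⟨⟨i, j⟩, hc⟩ ⟨⟨_, _⟩, hc'⟩ rfl rfl
    by_cases h' : (i, j + 1) ∈ cells q mu (fun _ => 0)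
    · have h : (i, j) ∈ cells q mu (fun _ => 0) :=
        hlow (Prod.mk_le_mk.2 ⟨le_rfl, j.le_succ⟩) h'
      rw [glue_of_mem h, glue_of_mem h']
      exact ⟨hT.1 ⟨_, h⟩ ⟨_, h'⟩ rfl rfl, fun _ => (T _).2⟩
    by_cases h : (i, j) ∈ cells q mu (fun _ => 0)
    · rw [glue_of_mem h, glue_of_not_mem h']
      exact le_and_eq_imp_of_lt (castAdd_lt_natAdd _ _)
    · rw [glue_of_not_mem h, glue_of_not_mem h']
      exact le_and_eq_imp_of_lt ((Fin.natAdd_lt_natAdd_iff m).2 (hU.2 _ _ rfl rfl))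
  · rintro ⟨⟨i, j⟩, hc⟩ ⟨⟨_, _⟩, hc'⟩ rfl rfl
    by_cases h : (i, j) ∈ cells q mu (fun _ => 0)
    · by_cases h' : (i + 1, j) ∈ cells q mu (fun _ => 0)
      · rw [glue_of_mem h, glue_of_mem h']
        exact le_and_eq_imp_of_lt (hT.2 ⟨_, h⟩ ⟨_, h'⟩ rfl rfl)
      · rw [glue_of_mem h, glue_of_not_mem h']
        exact le_and_eq_imp_of_lt (castAdd_lt_natAdd _ _)
    · have h' : (i + 1, j) ∉ cells q mu (fun _ => 0) :=
        fun h' => h (hlow (Prod.mk_le_mk.2 ⟨i.le_succ, le_rfl⟩) h')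
      rw [glue_of_not_mem h, glue_of_not_mem h']
      exact ⟨(Fin.natAdd_le_natAdd_iff m).2 (hU.1 _ _ rfl rfl), fun _ => Nat.le_add_right m _⟩

end Glue

noncomputable def glueTab (hmu : Antitone mu)
    (T : {T : ↥(cells q mu (fun _ => 0)) → Fin m // SSYT (cells q mu (fun _ => 0)) T})
    (U : {U : ↥(conjSkewCells q lam mu) → Fin n // SSYT (conjSkewCells q lam mu) U}) :
    StdTab q m n lam :=
  ⟨glue T.1 U.1, stdPred_glue hmu T.2 U.2⟩

section GlueTab

variable {hmu : Antitone mu}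
  {T : {T : ↥(cells q mu (fun _ => 0)) → Fin m // SSYT (cells q mu (fun _ => 0)) T}}
  {U : {U : ↥(conjSkewCells q lam mu) → Fin n // SSYT (conjSkewCells q lam mu) U}}

theorem entry_glueTab_of_mem (hsub : cells q mu (fun _ => 0) ⊆ cells q lam (fun _ => 0))
    {p : ℕ × ℕ} (h : p ∈ cells q mu (fun _ => 0)) :
    (glueTab hmu T U).entry p = T.1 ⟨p, h⟩ := by
  rw [StdTab.entry_of_mem (hsub h)]
  exact congrArg Fin.val (glue_of_mem (c := ⟨p, hsub h⟩) h)

theorem entry_glueTab_of_not_mem {p : ℕ × ℕ} (hp : p ∈ cells q lam (fun _ => 0))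
    (h : p ∉ cells q mu (fun _ => 0)) :
    (glueTab hmu T U).entry p = m + U.1 ⟨p.swap, mem_conjSkewCells.2 ⟨hp, h⟩⟩ := by
  rw [StdTab.entry_of_mem hp]
  exact congrArg Fin.val (glue_of_not_mem (c := ⟨p, hp⟩) h)

theorem hasEvenShape_glueTab (hsub : cells q mu (fun _ => 0) ⊆ cells q lam (fun _ => 0)) :
    (glueTab hmu T U).HasEvenShape mu := by
  intro p
  by_cases h : p ∈ cells q mu (fun _ => 0)
  · rw [entry_glueTab_of_mem hsub h]
    exact iff_of_true h (T.1 _).2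
  by_cases hp : p ∈ cells q lam (fun _ => 0)
  · rw [entry_glueTab_of_not_mem hp h]
    exact iff_of_false h (Nat.not_lt.2 (Nat.le_add_right m _))
  · exact iff_of_false h fun hlt => hp (StdTab.mem_of_entry_lt hlt)

theorem evenPart_glueTab (hlam : Antitone lam) (ht : (glueTab hmu T U).HasEvenShape mu) :
    (glueTab hmu T U).evenPart hlam ht = T :=
  Subtype.ext (funext fun c => Fin.ext (entry_glueTab_of_mem ht.subset c.2))

theorem oddPart_glueTab (hlam : Antitone lam) (ht : (glueTab hmu T U).HasEvenShape mu) :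
    (glueTab hmu T U).oddPart hlam ht = U := by
  refine Subtype.ext (funext fun c => Fin.ext ?_)
  have hc := mem_conjSkewCells.1 c.2
  show (glueTab hmu T U).entry c.1.swap - m = U.1 c
  rw [entry_glueTab_of_not_mem hc.1 hc.2]
  exact Nat.add_sub_cancel_left _ _

end GlueTab

theorem StdTab.glueTab_evenPart_oddPart (hlam : Antitone lam) (hmu : Antitone mu)
    (t : StdTab q m n lam) (ht : t.HasEvenShape mu) :
    glueTab hmu (t.evenPart hlam ht) (t.oddPart hlam ht) = t := by
  refine Subtype.ext (funext fun c => ?_)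
  show glue _ _ c = t.1 c
  by_cases h : c.1 ∈ cells q mu (fun _ => 0)
  · rw [glue_of_mem h]
    exact Fin.ext (StdTab.entry_of_mem c.2)
  · rw [glue_of_not_mem h]
    have hodd : m ≤ t.entry c.1 :=
      t.le_entry_swap_of_mem_conjSkewCells ht (p := c.1.swap) (mem_conjSkewCells.2 ⟨c.2, h⟩)
    refine Fin.ext ?_
    show m + (t.entry c.1 - m) = t.1 c
    rw [Nat.add_sub_cancel' hodd]
    exact StdTab.entry_of_mem c.2

noncomputable def splitEquiv (hlam : Antitone lam) (hmu : Antitone mu)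
    (hsub : cells q mu (fun _ => 0) ⊆ cells q lam (fun _ => 0)) :
    {t : StdTab q m n lam // t.HasEvenShape mu} ≃
      {T : ↥(cells q mu (fun _ => 0)) → Fin m // SSYT (cells q mu (fun _ => 0)) T} ×
        {U : ↥(conjSkewCells q lam mu) → Fin n // SSYT (conjSkewCells q lam mu) U} where
  toFun t := (t.1.evenPart hlam t.2, t.1.oddPart hlam t.2)
  invFun x := ⟨glueTab hmu x.1 x.2, hasEvenShape_glueTab hsub⟩
  left_inv t := Subtype.ext (t.1.glueTab_evenPart_oddPart hlam hmu t.2)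
  right_inv _ := Prod.ext (evenPart_glueTab hlam (hasEvenShape_glueTab (hmu := hmu) hsub))
    (oddPart_glueTab hlam (hasEvenShape_glueTab (hmu := hmu) hsub))

end

theorem standard_tab_equiv_pairs
    (hlam : ∀ i, lam (i + 1) ≤ lam i) :
    ∃ e : StdTab q m n lam ≃ PairTab q m n lam,
      ∀ (t : StdTab q m n lam) (a : Fin (m + n)),
        wtStd q m n lam t a = wtPair q m n lam (e t) a := by
  have hanti : Antitone lam := antitone_nat_of_succ_le hlam
  let fiberEquiv (f : Shape q lam) :=
    (Equiv.subtypeEquivRight fun t => StdTab.evenShape_eq_iff (m := m) (n := n) hanti f).trans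
      (splitEquiv hanti (antitone_muOf f) (cells_muOf_subset f.1))
  refine ⟨(Equiv.sigmaFiberEquiv (StdTab.evenShape · hanti)).symm.trans
    (Equiv.sigmaCongrRight fiberEquiv), fun t a => ?_⟩
  exact t.wtStd_eq_card_evenPart_add_card_oddPart hanti ((t.evenShape_eq_iff hanti _).1 rfl) a

end HookBijection
end
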